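/- Let n ∈ ℕ, n ≥ 2. For every Banach limit B₁ with B₁(σ_n x) = B₁(x) for all x ∈ ℓ∞, every extreme point B₂ of the set 𝔅 of all Banach limits, and every real t ≥ 0, one has ‖B₁ − t B₂‖_{ℓ∞*} = 1 + t. -/

import Mathlib

open Filter BoundedContinuousFunction

noncomputable section

/-- `ℓ∞`: the space of bounded real sequences (indexed from `0`). -/
abbrev LInf : Type := BoundedContinuousFunction ℕ ℝ

/-- The translation (shift) operator `T(x₁,x₂,…) = (0,x₁,x₂,…)` (0-indexed). -/
def shift (x : LInf) : LInf :=
  BoundedContinuousFunction.ofNormedAddCommGroup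
    (fun n => if n = 0 then 0 else x (n - 1)) continuous_of_discreteTopology ‖x‖
    (by
      intro n
      rcases n with _ | n
      · simp [norm_nonneg x]
      · simpa using x.norm_coe_le_norm n)

/-- The dilation operator `σ_m`, repeating each entry `m` times
(0-indexed: `(σ_m x)ₙ = x_{⌊n/m⌋}`, i.e. `(σ_m x)ₙ = x_{⌈n/m⌉}` in 1-indexed notation). -/
def dil (m : ℕ) (x : LInf) : LInf :=
  x.compContinuous ⟨fun n => n / m, continuous_of_discreteTopology⟩

/-- A Banach limit: a positive, normalised, shift-invariant continuous linear
functional on `ℓ∞`. -/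
def IsBanachLimit (B : LInf →L[ℝ] ℝ) : Prop :=
  (∀ x : LInf, (∀ n, 0 ≤ x n) → 0 ≤ B x) ∧ B 1 = 1 ∧ ∀ x : LInf, B (shift x) = B x

/-- The set `𝔅` of all Banach limits, as a subset of the dual space of `ℓ∞`. -/
def BanachLimits : Set (LInf →L[ℝ] ℝ) := {B | IsBanachLimit B}

/- A triangle-inequality argument: for `t ≤ 1` split `f - g = (f - t • g) - (1 - t) • g`,
for `t ≥ 1` split `t • (f - g) = (f - t • g) + (t - 1) • f`. -/
theorem norm_sub_smul_eq_one_add_of_norm_sub_eq_two {E : Type*} [SeminormedAddCommGroup E]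
    [NormedSpace ℝ E] {f g : E} (hf : ‖f‖ ≤ 1) (hg : ‖g‖ ≤ 1) (hfg : ‖f - g‖ = 2)
    {t : ℝ} (ht : 0 ≤ t) : ‖f - t • g‖ = 1 + t := by
  have hsmul : ∀ {s : ℝ} {h : E}, 0 ≤ s → ‖h‖ ≤ 1 → ‖s • h‖ ≤ s := fun hs hh => by
    rw [norm_smul, Real.norm_of_nonneg hs]
    exact mul_le_of_le_one_right hs hh
  refine le_antisymm ?_ ?_
  · calc ‖f - t • g‖ ≤ ‖f‖ + ‖t • g‖ := norm_sub_le _ _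
      _ ≤ 1 + t := add_le_add hf (hsmul ht hg)
  rcases le_total t 1 with ht1 | ht1
  · have hsplit : f - g = (f - t • g) - (1 - t) • g := by
      rw [sub_smul, one_smul]; abel
    have := hfg ▸ hsplit ▸ norm_sub_le (f - t • g) ((1 - t) • g)
    linarith [hsmul (sub_nonneg.mpr ht1) hg]
  · have hsplit : t • (f - g) = (f - t • g) + (t - 1) • f := by
      rw [smul_sub, sub_smul, one_smul]; abel
    have := norm_add_le (f - t • g) ((t - 1) • f)
    rw [← hsplit, norm_smul, hfg, Real.norm_of_nonneg ht] at this
    linarith [hsmul (sub_nonneg.mpr ht1) hf]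

theorem IsBanachLimit.mono {B : LInf →L[ℝ] ℝ} (hB : IsBanachLimit B) {x y : LInf}
    (hxy : x ≤ y) : B x ≤ B y := by
  have := hB.1 (y - x) fun n => sub_nonneg.mpr (hxy n)
  rwa [map_sub, sub_nonneg] at this

theorem IsBanachLimit.opNorm_le_one {B : LInf →L[ℝ] ℝ} (hB : IsBanachLimit B) : ‖B‖ ≤ 1 := by
  refine B.opNorm_le_bound zero_le_one fun x => ?_
  have hconst : B (‖x‖ • 1) = ‖x‖ := by rw [map_smul, hB.2.1, smul_eq_mul, mul_one]
  have hle : ∀ n, |x n| ≤ ‖x‖ := x.norm_coe_le_norm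
  have hupper := hB.mono (y := ‖x‖ • 1) fun n => by simpa using (abs_le.mp (hle n)).2
  have hlower := hB.mono (x := -(‖x‖ • 1)) (y := x) fun n => by
    simpa [neg_le] using (abs_le.mp (hle n)).1
  rw [map_neg, hconst] at hlower
  rw [hconst] at hupper
  rw [Real.norm_eq_abs, one_mul, abs_le]
  exact ⟨hlower, hupper⟩

theorem norm_dilation_invariant_sub_smul_extreme (n : ℕ)
    (hT14 : ∀ B₁ B₂ : LInf →L[ℝ] ℝ, IsBanachLimit B₁ → (∀ x : LInf, B₁ (dil n x) = B₁ x) →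
      B₂ ∈ Set.extremePoints ℝ BanachLimits → ‖B₁ - B₂‖ = 2)
    (B₁ B₂ : LInf →L[ℝ] ℝ) (hB₁ : IsBanachLimit B₁)
    (hinv : ∀ x : LInf, B₁ (dil n x) = B₁ x)
    (hB₂ : B₂ ∈ Set.extremePoints ℝ BanachLimits)
    (t : ℝ) (ht : 0 ≤ t) :
    ‖B₁ - t • B₂‖ = 1 + t :=
  norm_sub_smul_eq_one_add_of_norm_sub_eq_two (f := B₁) (g := B₂) hB₁.opNorm_le_one
    (show IsBanachLimit B₂ from hB₂.1).opNorm_le_one (hT14 B₁ B₂ hB₁ hinv hB₂) ht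

end
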